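/- Let d, k, q_A, q_B be positive integers, let μ be the uniform (Haar) probability measure on the unit sphere of ℂ^d, and let t ≥ 0 be such that for every operator N on (ℂ^d)^{⊗k} ⊗ (ℂ^d)^{⊗k} with 0 ≤ N ≤ I of the separable form N = Σ_s A_s ⊗ B_s (A_s, B_s positive semidefinite on (ℂ^d)^{⊗k}), one has |∫∫ Tr[N · ((|φ⟩⟨φ|)^{⊗k} ⊗ ((|φ⟩⟨φ|)^{⊗k} − (|ψ⟩⟨ψ|)^{⊗k}))] dμ(φ) dμ(ψ)| ≤ t. Let σ be a density matrix on ℂ^{q_A} ⊗ ℂ^{q_B} admitting a decomposition σ = (1+s)σ⁺ − s σ⁻ with s ≥ 0 and σ⁺, σ⁻ separable states. Let M be an operator with 0 ≤ M ≤ I on ((ℂ^d)^{⊗k} ⊗ ℂ^{q_A}) ⊗ ((ℂ^d)^{⊗k} ⊗ ℂ^{q_B}) which is separable across this bipartite cut, i.e. M = Σ_t A_t ⊗ B_t with A_t, B_t positive semidefinite on the respective factors. Then |∫∫ Tr[M · Θ((|φ⟩⟨φ|)^{⊗k} ⊗ ((|φ⟩⟨φ|)^{⊗k} − (|ψ⟩⟨ψ|)^{⊗k})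 ⊗ σ)] dμ(φ) dμ(ψ)| ≤ (1+2s)·t, where Θ is the canonical unitary reordering of tensor factors placing Alice's k copies together with the ℂ^{q_A} factor and Bob's k copies together with the ℂ^{q_B} factor. -/

import Mathlib

open Matrix MeasureTheory
open scoped Kronecker ComplexOrder

noncomputable section

/-- Equip `ℂ^d` with its Borel σ-algebra. -/
instance {d : ℕ} : MeasurableSpace (EuclideanSpace ℂ (Fin d)) := borel _

instance {d : ℕ} : BorelSpace (EuclideanSpace ℂ (Fin d)) := ⟨rfl⟩

/-- An operator on a bipartite space is separable (across the `α|β` cut) if it is a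
finite sum `Σ_s A_s ⊗ B_s` of Kronecker products of positive semidefinite operators. -/
def IsSeparableOp {α β : Type*} [Fintype α] [Fintype β] [DecidableEq α] [DecidableEq β]
    (M : Matrix (α × β) (α × β) ℂ) : Prop :=
  ∃ (n : ℕ) (A : Fin n → Matrix α α ℂ) (B : Fin n → Matrix β β ℂ),
    (∀ t, (A t).PosSemidef) ∧ (∀ t, (B t).PosSemidef) ∧ M = ∑ t, A t ⊗ₖ B t

/-- A separable state: a convex combination `Σ_i p_i ρ_i ⊗ τ_i` of Kronecker products of
density matrices. -/
def IsSeparableState {α β : Type*} [Fintype α] [Fintype β] [DecidableEq α] [DecidableEq β]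
    (σ : Matrix (α × β) (α × β) ℂ) : Prop :=
  ∃ (n : ℕ) (p : Fin n → ℝ) (ρ : Fin n → Matrix α α ℂ) (τ : Fin n → Matrix β β ℂ),
    (∀ i, 0 ≤ p i) ∧ (∑ i, p i = 1) ∧
    (∀ i, (ρ i).PosSemidef ∧ (ρ i).trace = 1) ∧
    (∀ i, (τ i).PosSemidef ∧ (τ i).trace = 1) ∧
    σ = ∑ i, (p i : ℂ) • (ρ i ⊗ₖ τ i)

/-- `(|φ⟩⟨φ|)^{⊗k}`, the `k`-fold tensor power of the rank-one projection `|φ⟩⟨φ|`,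
as a matrix indexed by `Fin k → Fin d`. -/
def powKet {d : ℕ} (k : ℕ) (φ : EuclideanSpace ℂ (Fin d)) :
    Matrix (Fin k → Fin d) (Fin k → Fin d) ℂ :=
  Matrix.of fun i j => ∏ l, φ (i l) * star (φ (j l))

/-- `Θ(X ⊗ σ)`: the operator `X ⊗ σ` conjugated by the canonical unitary reordering of
tensor factors placing Alice's factors (`α₁`, `α₂`) together and Bob's factors
(`β₁`, `β₂`) together. -/
def reorderTensor {α₁ β₁ α₂ β₂ : Type*}
    (X : Matrix (α₁ × β₁) (α₁ × β₁) ℂ) (σ : Matrix (α₂ × β₂) (α₂ × β₂) ℂ) :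
    Matrix ((α₁ × α₂) × (β₁ × β₂)) ((α₁ × α₂) × (β₁ × β₂)) ℂ :=
  Matrix.of fun p q =>
    X (p.1.1, p.2.1) (q.1.1, q.2.1) * σ (p.1.2, p.2.2) (q.1.2, q.2.2)

/-!
Preparing the ancilla in a state `τ` turns `M` into the operator
`N_τ = Tr_anc[M (1 ⊗ τ)]` on `(ℂ^d)^{⊗k} ⊗ (ℂ^d)^{⊗k}`, with `Tr[M Θ(X ⊗ τ)] = Tr[N_τ X]`.
When `τ` is a separable state, `N_τ` inherits from `M` both separability and `0 ≤ N_τ ≤ I`,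
so the hypothesis bounds the averaged quantity for `N_{σ⁺}` and `N_{σ⁻}` by `t`. As `τ ↦ N_τ`
is linear, the quantity for `σ = (1+s)σ⁺ − sσ⁻` is at most `(1+s)t + st`. The integrands are
continuous and `μ` lives on the compact unit sphere, so they are integrable and the double
integral may be split accordingly.
-/

namespace Matrix

section PartialTrace

variable {𝕜 γ δ : Type*} [RCLike 𝕜] [Fintype δ]

open scoped MatrixOrder in
theorem PosSemidef.trace_mul_nonneg [Fintype γ] {A B : Matrix γ γ 𝕜} (hA : A.PosSemidef)
    (hB : B.PosSemidef) : 0 ≤ (A * B).trace := by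
  classical
  obtain ⟨C, rfl⟩ := CStarAlgebra.nonneg_iff_eq_star_mul_self.mp hB.nonneg
  rw [star_eq_conjTranspose, ← Matrix.mul_assoc, trace_mul_comm, ← Matrix.mul_assoc]
  exact (hA.mul_mul_conjTranspose_same C).trace_nonneg

/-- The partial trace `Tr_δ[A (1 ⊗ ρ)]`. -/
def partialTraceWith : Matrix (γ × δ) (γ × δ) 𝕜 →ₗ[𝕜] Matrix δ δ 𝕜 →ₗ[𝕜] Matrix γ γ 𝕜 :=
  LinearMap.mk₂ 𝕜 (fun A ρ => of fun i j => ∑ a, ∑ a', A (i, a) (j, a') * ρ a' a)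
    (fun _ _ _ => by ext; simp [add_mul, Finset.sum_add_distrib])
    (fun _ _ _ => by ext; simp [Finset.mul_sum, mul_assoc])
    (fun _ _ _ => by ext; simp [mul_add, Finset.sum_add_distrib])
    (fun _ _ _ => by ext; simp [Finset.mul_sum, mul_left_comm])

theorem partialTraceWith_apply (A : Matrix (γ × δ) (γ × δ) 𝕜) (ρ : Matrix δ δ 𝕜) (i j : γ) :
    partialTraceWith A ρ i j = ∑ a, ∑ a', A (i, a) (j, a') * ρ a' a := rfl

theorem trace_mul_kronecker [Fintype γ] (A : Matrix (γ × δ) (γ × δ) 𝕜) (X : Matrix γ γ 𝕜)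
    (ρ : Matrix δ δ 𝕜) : (A * (X ⊗ₖ ρ)).trace = (partialTraceWith A ρ * X).trace := by
  simp only [trace, diag, mul_apply, kroneckerMap_apply, partialTraceWith_apply,
    Fintype.sum_prod_type, Finset.sum_mul]
  refine Finset.sum_congr rfl fun i _ => Finset.sum_comm.trans ?_
  simp only [mul_comm (X _ _), mul_assoc]

theorem partialTraceWith_one [DecidableEq γ] [DecidableEq δ] (ρ : Matrix δ δ 𝕜) :
    partialTraceWith 1 ρ = ρ.trace • (1 : Matrix γ γ 𝕜) := by
  ext i j
  by_cases h : i = j <;> simp [partialTraceWith_apply, one_apply, h, trace]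

theorem IsHermitian.partialTraceWith {A : Matrix (γ × δ) (γ × δ) 𝕜} {ρ : Matrix δ δ 𝕜}
    (hA : A.IsHermitian) (hρ : ρ.IsHermitian) : (partialTraceWith A ρ).IsHermitian := by
  ext i j
  simp only [conjTranspose_apply, partialTraceWith_apply, star_sum, star_mul']
  rw [Finset.sum_comm]
  simp only [hA.apply, hρ.apply, mul_comm]

theorem PosSemidef.partialTraceWith [Fintype γ] {A : Matrix (γ × δ) (γ × δ) 𝕜}
    {ρ : Matrix δ δ 𝕜} (hA : A.PosSemidef) (hρ : ρ.PosSemidef) :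
    (partialTraceWith A ρ).PosSemidef := by
  refine .of_dotProduct_mulVec_nonneg (hA.1.partialTraceWith hρ.1) fun x => ?_
  have := hA.trace_mul_nonneg ((posSemidef_vecMulVec_self_star x).kronecker hρ)
  rwa [trace_mul_kronecker, mul_vecMulVec, trace_vecMulVec, dotProduct_comm] at this

end PartialTrace

end Matrix

section Separable

variable {α β : Type*} [Fintype α] [Fintype β] [DecidableEq α] [DecidableEq β]

theorem isSeparableOp_zero : IsSeparableOp (0 : Matrix (α × β) (α × β) ℂ) :=
  ⟨0, finZeroElim, finZeroElim, finZeroElim, finZeroElim, by simp⟩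

theorem isSeparableOp_kronecker {A : Matrix α α ℂ} {B : Matrix β β ℂ} (hA : A.PosSemidef)
    (hB : B.PosSemidef) : IsSeparableOp (A ⊗ₖ B) :=
  ⟨1, fun _ => A, fun _ => B, fun _ => hA, fun _ => hB, by simp⟩

theorem IsSeparableOp.add {M N : Matrix (α × β) (α × β) ℂ} (hM : IsSeparableOp M)
    (hN : IsSeparableOp N) : IsSeparableOp (M + N) := by
  obtain ⟨n, A, B, hA, hB, rfl⟩ := hM
  obtain ⟨m, C, D, hC, hD, rfl⟩ := hN
  exact ⟨n + m, Fin.append A C, Fin.append B D, Fin.addCases (by simpa) (by simpa),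
    Fin.addCases (by simpa) (by simpa), by simp [Fin.sum_univ_add]⟩

theorem IsSeparableOp.sum {ι : Type*} {s : Finset ι} {M : ι → Matrix (α × β) (α × β) ℂ}
    (hM : ∀ i ∈ s, IsSeparableOp (M i)) : IsSeparableOp (∑ i ∈ s, M i) :=
  Finset.sum_induction M IsSeparableOp (fun _ _ => .add) isSeparableOp_zero hM

theorem IsSeparableState.posSemidef {σ : Matrix (α × β) (α × β) ℂ} (hσ : IsSeparableState σ) :
    σ.PosSemidef := by
  obtain ⟨n, p, ρ, τ, hp, -, hρ, hτ, rfl⟩ := hσ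
  exact posSemidef_sum _ fun i _ =>
    ((hρ i).1.kronecker (hτ i).1).smul (by exact_mod_cast hp i)

theorem IsSeparableState.trace_eq_one {σ : Matrix (α × β) (α × β) ℂ}
    (hσ : IsSeparableState σ) : σ.trace = 1 := by
  obtain ⟨n, p, ρ, τ, -, hp, hρ, hτ, rfl⟩ := hσ
  simp [trace_sum, trace_kronecker, (hρ _).2, (hτ _).2, ← Complex.ofReal_sum, hp]

end Separable

section AncillaTrace

variable {α₁ β₁ α₂ β₂ : Type*} [Fintype α₂] [Fintype β₂]

/-- `N_τ = Tr_{α₂ β₂}[M (1 ⊗ τ)]`, after regrouping the factors of `M` as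
`(α₁ × β₁) × (α₂ × β₂)`. -/
def ancillaTrace :
    Matrix ((α₁ × α₂) × (β₁ × β₂)) ((α₁ × α₂) × (β₁ × β₂)) ℂ →ₗ[ℂ]
      Matrix (α₂ × β₂) (α₂ × β₂) ℂ →ₗ[ℂ] Matrix (α₁ × β₁) (α₁ × β₁) ℂ :=
  partialTraceWith ∘ₗ
    (reindexLinearEquiv ℂ ℂ (Equiv.prodProdProdComm α₁ α₂ β₁ β₂)
      (Equiv.prodProdProdComm α₁ α₂ β₁ β₂)).toLinearMap

theorem ancillaTrace_apply (M : Matrix ((α₁ × α₂) × (β₁ × β₂)) ((α₁ × α₂) × (β₁ × β₂)) ℂ)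
    (τ : Matrix (α₂ × β₂) (α₂ × β₂) ℂ) :
    ancillaTrace M τ = partialTraceWith
      (M.submatrix (Equiv.prodProdProdComm α₁ α₂ β₁ β₂).symm
        (Equiv.prodProdProdComm α₁ α₂ β₁ β₂).symm) τ := rfl

theorem trace_mul_reorderTensor [Fintype α₁] [Fintype β₁]
    (M : Matrix ((α₁ × α₂) × (β₁ × β₂)) ((α₁ × α₂) × (β₁ × β₂)) ℂ)
    (X : Matrix (α₁ × β₁) (α₁ × β₁) ℂ) (τ : Matrix (α₂ × β₂) (α₂ × β₂) ℂ) :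
    (M * reorderTensor X τ).trace = (ancillaTrace M τ * X).trace := by
  set e := Equiv.prodProdProdComm α₁ α₂ β₁ β₂
  have hM : M = (M.submatrix e.symm e.symm).submatrix e e := by simp
  have hX : reorderTensor X τ = (X ⊗ₖ τ).submatrix e e := rfl
  rw [ancillaTrace_apply, ← trace_mul_kronecker, hX, hM, submatrix_mul_equiv]
  exact Fintype.sum_equiv e _ _ fun _ => rfl

theorem ancillaTrace_kronecker (A : Matrix (α₁ × α₂) (α₁ × α₂) ℂ)
    (B : Matrix (β₁ × β₂) (β₁ × β₂) ℂ) (ρ : Matrix α₂ α₂ ℂ) (υ : Matrix β₂ β₂ ℂ) :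
    ancillaTrace (A ⊗ₖ B) (ρ ⊗ₖ υ) = partialTraceWith A ρ ⊗ₖ partialTraceWith B υ := by
  ext p q
  simp only [ancillaTrace_apply, partialTraceWith_apply, kroneckerMap_apply, submatrix_apply,
    Fintype.sum_prod_type, Finset.sum_mul_sum, Equiv.prodProdProdComm_symm]
  exact Finset.sum_congr rfl fun _ _ => Finset.sum_congr rfl fun _ _ =>
    Finset.sum_congr rfl fun _ _ => Finset.sum_congr rfl fun _ _ => mul_mul_mul_comm _ _ _ _

variable [Fintype α₁] [Fintype β₁]

theorem trace_mul_reorderTensor_smul_sub_smul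
    (M : Matrix ((α₁ × α₂) × (β₁ × β₂)) ((α₁ × α₂) × (β₁ × β₂)) ℂ)
    (X : Matrix (α₁ × β₁) (α₁ × β₁) ℂ) (a b : ℂ) (τ₁ τ₂ : Matrix (α₂ × β₂) (α₂ × β₂) ℂ) :
    (M * reorderTensor X (a • τ₁ - b • τ₂)).trace =
      a * (ancillaTrace M τ₁ * X).trace - b * (ancillaTrace M τ₂ * X).trace := by
  rw [trace_mul_reorderTensor, map_sub, map_smul, map_smul, Matrix.sub_mul, Matrix.smul_mul,
    Matrix.smul_mul, trace_sub, trace_smul, trace_smul, smul_eq_mul, smul_eq_mul]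

theorem posSemidef_ancillaTrace
    {M : Matrix ((α₁ × α₂) × (β₁ × β₂)) ((α₁ × α₂) × (β₁ × β₂)) ℂ}
    {τ : Matrix (α₂ × β₂) (α₂ × β₂) ℂ} (hM : M.PosSemidef) (hτ : τ.PosSemidef) :
    (ancillaTrace M τ).PosSemidef :=
  (hM.submatrix _).partialTraceWith hτ

variable [DecidableEq α₁] [DecidableEq β₁] [DecidableEq α₂] [DecidableEq β₂]

theorem posSemidef_one_sub_ancillaTrace
    {M : Matrix ((α₁ × α₂) × (β₁ × β₂)) ((α₁ × α₂) × (β₁ × β₂)) ℂ}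
    {τ : Matrix (α₂ × β₂) (α₂ × β₂) ℂ} (hM : (1 - M).PosSemidef) (hτ : τ.PosSemidef)
    (hτ1 : τ.trace = 1) : (1 - ancillaTrace M τ).PosSemidef := by
  have : 1 - ancillaTrace M τ = ancillaTrace (1 - M) τ := by
    rw [map_sub, LinearMap.sub_apply, ancillaTrace_apply 1, submatrix_one_equiv,
      partialTraceWith_one, hτ1, one_smul]
  exact this ▸ posSemidef_ancillaTrace hM hτ

theorem isSeparableOp_ancillaTrace
    {M : Matrix ((α₁ × α₂) × (β₁ × β₂)) ((α₁ × α₂) × (β₁ × β₂)) ℂ}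
    {τ : Matrix (α₂ × β₂) (α₂ × β₂) ℂ} (hM : IsSeparableOp M) (hτ : IsSeparableState τ) :
    IsSeparableOp (ancillaTrace M τ) := by
  obtain ⟨n, A, B, hA, hB, rfl⟩ := hM
  obtain ⟨m, p, ρ, υ, hp, -, hρ, hυ, rfl⟩ := hτ
  simp only [map_sum, LinearMap.sum_apply, ← smul_kronecker, ancillaTrace_kronecker]
  exact IsSeparableOp.sum fun i _ => IsSeparableOp.sum fun t _ => isSeparableOp_kronecker
    ((hA t).partialTraceWith ((hρ i).1.smul (by exact_mod_cast hp i)))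
    ((hB t).partialTraceWith (hυ i).1)

end AncillaTrace
section ContinuousIntegral

variable {X Y : Type*} [TopologicalSpace X] [T2Space X] [MeasurableSpace X]
  [OpensMeasurableSpace X] {μ : Measure X} [IsFiniteMeasure μ]

theorem Continuous.integrable_of_ae_mem_compact {E : Type*} [NormedAddCommGroup E] {f : X → E}
    (hf : Continuous f) {K : Set X} (hK : IsCompact K) (hμK : ∀ᵐ x ∂μ, x ∈ K) :
    Integrable f μ :=
  Measure.restrict_eq_self_of_ae_mem hμK ▸ hf.continuousOn.integrableOn_compact hK

variable [TopologicalSpace Y] [T2Space Y] [MeasurableSpace Y] [OpensMeasurableSpace Y]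
  [SecondCountableTopologyEither X Y] {ν : Measure Y} [IsFiniteMeasure ν]

theorem integral_integral_const_mul_sub_const_mul {f g : X × Y → ℂ} (hf : Continuous f)
    (hg : Continuous g) {K : Set X} {L : Set Y} (hK : IsCompact K) (hL : IsCompact L)
    (hμK : ∀ᵐ x ∂μ, x ∈ K) (hνL : ∀ᵐ y ∂ν, y ∈ L) (a b : ℂ) :
    ∫ x, ∫ y, (a * f (x, y) - b * g (x, y)) ∂ν ∂μ =
      a * ∫ x, ∫ y, f (x, y) ∂ν ∂μ - b * ∫ x, ∫ y, g (x, y) ∂ν ∂μ := by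
  have hKL : ∀ᵐ z ∂μ.prod ν, z ∈ K ×ˢ L :=
    (Measure.quasiMeasurePreserving_fst.ae hμK).and (Measure.quasiMeasurePreserving_snd.ae hνL)
  have hint {h : X × Y → ℂ} (hh : Continuous h) : Integrable h (μ.prod ν) :=
    hh.integrable_of_ae_mem_compact (hK.prod hL) hKL
  rw [← integral_prod f (hint hf), ← integral_prod g (hint hg),
    ← integral_prod (fun z => a * f z - b * g z) (hint (by fun_prop)),
    integral_sub ((hint hf).const_mul a) ((hint hg).const_mul b), integral_const_mul,
    integral_const_mul]

end ContinuousIntegral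

@[fun_prop]
theorem Continuous.matrix_kronecker {X R l m n p : Type*} [TopologicalSpace X] [TopologicalSpace R]
    [Mul R] [ContinuousMul R] {A : X → Matrix l m R} {B : X → Matrix n p R} (hA : Continuous A)
    (hB : Continuous B) : Continuous fun x => A x ⊗ₖ B x :=
  continuous_pi fun _ => continuous_pi fun _ => (hA.matrix_elem _ _).mul (hB.matrix_elem _ _)

@[fun_prop]
theorem continuous_powKet (d k : ℕ) : Continuous (powKet (d := d) k) := by
  refine continuous_pi fun i => continuous_pi fun j => ?_
  simp only [powKet, of_apply]
  fun_prop

theorem continuous_trace_mul_powKet_kronecker {d k : ℕ}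
    (N : Matrix ((Fin k → Fin d) × (Fin k → Fin d)) ((Fin k → Fin d) × (Fin k → Fin d)) ℂ) :
    Continuous fun z : EuclideanSpace ℂ (Fin d) × EuclideanSpace ℂ (Fin d) =>
      (N * (powKet k z.1 ⊗ₖ (powKet k z.1 - powKet k z.2))).trace := by
  fun_prop

theorem separable_with_resource_bound_general (d k qA qB : ℕ)
    (μ : Measure (EuclideanSpace ℂ (Fin d))) [IsProbabilityMeasure μ]
    (hsphere : μ {v : EuclideanSpace ℂ (Fin d) | ‖v‖ = 1}ᶜ = 0)
    (t : ℝ)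
    (hN : ∀ N : Matrix ((Fin k → Fin d) × (Fin k → Fin d))
        ((Fin k → Fin d) × (Fin k → Fin d)) ℂ,
      N.PosSemidef → (1 - N).PosSemidef → IsSeparableOp N →
      ‖∫ φ, ∫ ψ,
          Matrix.trace (N * (powKet k φ ⊗ₖ (powKet k φ - powKet k ψ))) ∂μ ∂μ‖ ≤ t)
    (s : ℝ) (hs : 0 ≤ s)
    (σ σplus σminus : Matrix (Fin qA × Fin qB) (Fin qA × Fin qB) ℂ)
    (hplus : IsSeparableState σplus) (hminus : IsSeparableState σminus)
    (hdecomp : σ = ((1 + s : ℝ) : ℂ) • σplus - (s : ℂ) • σminus)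
    (M : Matrix (((Fin k → Fin d) × Fin qA) × ((Fin k → Fin d) × Fin qB))
      (((Fin k → Fin d) × Fin qA) × ((Fin k → Fin d) × Fin qB)) ℂ)
    (hM0 : M.PosSemidef) (hM1 : (1 - M).PosSemidef) (hMsep : IsSeparableOp M) :
    ‖∫ φ, ∫ ψ,
        Matrix.trace
          (M * reorderTensor (powKet k φ ⊗ₖ (powKet k φ - powKet k ψ)) σ) ∂μ ∂μ‖ ≤
      (1 + 2 * s) * t := by
  have hI : ∀ τ, IsSeparableState τ → ‖∫ φ, ∫ ψ,
      (ancillaTrace M τ * (powKet k φ ⊗ₖ (powKet k φ - powKet k ψ))).trace ∂μ ∂μ‖ ≤ t :=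
    fun τ hτ => hN _ (posSemidef_ancillaTrace hM0 hτ.posSemidef)
      (posSemidef_one_sub_ancillaTrace hM1 hτ.posSemidef hτ.trace_eq_one)
      (isSeparableOp_ancillaTrace hMsep hτ)
  have hS : ∀ᵐ v ∂μ, v ∈ Metric.sphere (0 : EuclideanSpace ℂ (Fin d)) 1 :=
    (ae_iff.mpr hsphere).mono fun _ => mem_sphere_zero_iff_norm.mpr
  subst hdecomp
  simp_rw [trace_mul_reorderTensor_smul_sub_smul]
  rw [integral_integral_const_mul_sub_const_mul (continuous_trace_mul_powKet_kronecker _)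
    (continuous_trace_mul_powKet_kronecker _) (isCompact_sphere 0 1) (isCompact_sphere 0 1) hS hS]
  refine (norm_sub_le _ _).trans ?_
  rw [norm_mul, norm_mul, Complex.norm_real, Complex.norm_real, Real.norm_of_nonneg hs,
    Real.norm_of_nonneg (by linarith)]
  linarith [mul_le_mul_of_nonneg_left (hI _ hplus) (by linarith : 0 ≤ 1 + s),
    mul_le_mul_of_nonneg_left (hI _ hminus) hs]

/-- Suppose every separable operator `0 ≤ N ≤ I` on
`(ℂ^d)^{⊗k} ⊗ (ℂ^d)^{⊗k}` satisfies the Haar-averaged bound with constant `t`.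
If `σ` is a state on `ℂ^{q_A} ⊗ ℂ^{q_B}` decomposed as `σ = (1+s)σ⁺ − sσ⁻` with `s ≥ 0`
and `σ⁺, σ⁻` separable states, then every separable operator `0 ≤ M ≤ I` on
`((ℂ^d)^{⊗k} ⊗ ℂ^{q_A}) ⊗ ((ℂ^d)^{⊗k} ⊗ ℂ^{q_B})` satisfies the corresponding
Haar-averaged bound with constant `(1+2s)·t`. -/
theorem separable_with_resource_bound (d k qA qB : ℕ)
    (hd : 0 < d) (hk : 0 < k) (hqA : 0 < qA) (hqB : 0 < qB)
    (μ : Measure (EuclideanSpace ℂ (Fin d))) [IsProbabilityMeasure μ]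
    (hsphere : μ {v : EuclideanSpace ℂ (Fin d) | ‖v‖ = 1}ᶜ = 0)
    (hinv : ∀ U : Matrix.unitaryGroup (Fin d) ℂ,
      μ.map (fun v => Matrix.toEuclideanLin (U : Matrix (Fin d) (Fin d) ℂ) v) = μ)
    (t : ℝ) (ht : 0 ≤ t)
    (hN : ∀ N : Matrix ((Fin k → Fin d) × (Fin k → Fin d))
        ((Fin k → Fin d) × (Fin k → Fin d)) ℂ,
      N.PosSemidef → (1 - N).PosSemidef → IsSeparableOp N →
      ‖∫ φ, ∫ ψ,
          Matrix.trace (N * (powKet k φ ⊗ₖ (powKet k φ - powKet k ψ))) ∂μ ∂μ‖ ≤ t)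
    (s : ℝ) (hs : 0 ≤ s)
    (σ σplus σminus : Matrix (Fin qA × Fin qB) (Fin qA × Fin qB) ℂ)
    (hσ : σ.PosSemidef) (hσtr : σ.trace = 1)
    (hplus : IsSeparableState σplus) (hminus : IsSeparableState σminus)
    (hdecomp : σ = ((1 + s : ℝ) : ℂ) • σplus - (s : ℂ) • σminus)
    (M : Matrix (((Fin k → Fin d) × Fin qA) × ((Fin k → Fin d) × Fin qB))
      (((Fin k → Fin d) × Fin qA) × ((Fin k → Fin d) × Fin qB)) ℂ)
    (hM0 : M.PosSemidef) (hM1 : (1 - M).PosSemidef) (hMsep : IsSeparableOp M) :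
    ‖∫ φ, ∫ ψ,
        Matrix.trace
          (M * reorderTensor (powKet k φ ⊗ₖ (powKet k φ - powKet k ψ)) σ) ∂μ ∂μ‖ ≤
      (1 + 2 * s) * t :=
  separable_with_resource_bound_general d k qA qB μ hsphere t hN s hs σ σplus σminus hplus hminus
    hdecomp M hM0 hM1 hMsep
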